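/- arXiv:2312.02996 — 2 statements merged into one kernel-verified Lean document; each statement's English description precedes it below -/
import Mathlib

section
/- Relation substitution laxly distributes over composition: for all binary relations a, b, a', b' on Σ-terms, (a ; b)[a' ; b'] ≤ (a[a']) ; (b[b']), where ; is relational composition and ≤ is inclusion of relations. -/
/-- Σ-terms over a signature (operator symbols `Op` with arities `ar`) and variables `V`. -/
inductive Tm (Op : Type) (ar : Op → ℕ) (V : Type) : Type where
  | var : V → Tm Op ar V
  | op : (o : Op) → (Fin (ar o) → Tm Op ar V) → Tm Op ar V

namespace Tm

variable {Op : Type} {ar : Op → ℕ} {V : Type}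

/-- Homomorphic extension of a substitution `σ : V → Tm Op ar V` to terms. -/
def subst (σ : V → Tm Op ar V) : Tm Op ar V → Tm Op ar V
  | .var x => σ x
  | .op o ts => .op o fun i => (ts i).subst σ

end Tm

/-- Binary relations on Σ-terms. -/
abbrev TRel (Op : Type) (ar : Op → ℕ) (V : Type) := Tm Op ar V → Tm Op ar V → Prop

variable {Op : Type} {ar : Op → ℕ} {V : Type}

/-- The relation `▷` of ground-rule instances: the closure of the ground rule `R`
under substitution instances: `t^σ ▷ s^σ` whenever `t R s`. -/
def Inst (R : TRel Op ar V) : TRel Op ar V := fun t s =>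
  ∃ (t₀ s₀ : Tm Op ar V) (σ : V → Tm Op ar V), R t₀ s₀ ∧ t = t₀.subst σ ∧ s = s₀.subst σ

/-- Relation substitution `a[b]`. -/
def RSub (a b : TRel Op ar V) : TRel Op ar V := fun t s =>
  ∃ (σ ρ : V → Tm Op ar V) (t₀ s₀ : Tm Op ar V),
    t = t₀.subst σ ∧ s = s₀.subst ρ ∧ a t₀ s₀ ∧ ∀ x : V, b (σ x) (ρ x)

/-- Relational composition `a ; b`. -/
def RComp (a b : TRel Op ar V) : TRel Op ar V := fun t s => ∃ u, a t u ∧ b u s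

/-- Relation substitution laxly distributes over composition:
`(a ; b)[a' ; b'] ≤ a[a'] ; b[b']`. -/
theorem rsub_comp [Countable V] (a b a' b' : TRel Op ar V) :
    RSub (RComp a b) (RComp a' b') ≤ RComp (RSub a a') (RSub b b') := by
  rintro t s ⟨σ, ρ, t₀, s₀, ht, hs, ⟨u₀, hau, hub⟩, hx⟩
  choose μ hμ1 hμ2 using hx
  exact ⟨u₀.subst μ, ⟨σ, μ, t₀, u₀, ht, rfl, hau, hμ1⟩,
    ⟨μ, ρ, u₀, s₀, rfl, hs, hub, hμ2⟩⟩
end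

section
/- For all binary relations a, b on Σ-terms, (â)[b] ≤ (a[b])^ ∨ b, where â is compatible refinement, a[b] is relation substitution, and ∨ is union of relations. -/
variable {Op : Type} {ar : Op → ℕ} {V : Type}

/-- The operator `ã`: relates terms with the same outermost operator and
pairwise `a`-related arguments. -/
def Tilde (a : TRel Op ar V) : TRel Op ar V := fun t s =>
  ∃ (o : Op) (ts ss : Fin (ar o) → Tm Op ar V),
    t = .op o ts ∧ s = .op o ss ∧ ∀ i, a (ts i) (ss i)

/-- The coreflexive `Iη`: relates `t` to `s` iff `t = s` and `t` is a variable. -/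
def IEta : TRel Op ar V := fun t s => t = s ∧ ∃ x : V, t = .var x

/-- Compatible refinement `â = Iη ∨ ã`. -/
def Hat (a : TRel Op ar V) : TRel Op ar V := IEta ⊔ Tilde a

/-- `(â)[b] ≤ (a[b])^ ∨ b`. -/
theorem hat_rsub [Countable V] (a b : TRel Op ar V) :
    RSub (Hat a) b ≤ Hat (RSub a b) ⊔ b := by
  rintro t s ⟨σ, ρ, t₀, s₀, rfl, rfl, (⟨rfl, x, rfl⟩ | ⟨o, ts, ss, rfl, rfl, h⟩), hb⟩
  · exact Or.inr (hb x)
  · exact Or.inl (Or.inr ⟨o, _, _, rfl, rfl, fun i => ⟨σ, ρ, ts i, ss i, rfl, rfl, h i, hb⟩⟩)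
end
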